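/- Let k ≥ 2, T_1, …, T_k > 0, let 1 ≤ α ≤ k−1 and 1 ≤ i ≤ n. Then (∂/∂w_i^α − ζ^i) G^{(k)} = −(\bar{w}_i^α / (4 T_α)) · G^{(k)}, where ∂/∂w_i^α is the Wirtinger derivative, ζ^i = (1/(T_1 + ⋯ + T_k)) Σ_{β=1}^{k−1} T_β ∂/∂w_i^β, and \bar{w} denotes complex conjugation. -/

import Mathlib

open MeasureTheory

/-- The Gaussian `G_T(x,z) = (4πT)^{−(2n+m)/2} exp(−(|x|²+|z|²)/(4T))` on `ℝ^m × ℂ^n`. -/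
noncomputable def gaussT (m n : ℕ) (T : ℝ) (p : (Fin m → ℝ) × (Fin n → ℂ)) : ℝ :=
  (4 * Real.pi * T) ^ (-((2 * (n : ℝ) + (m : ℝ)) / 2)) *
    Real.exp (-(((∑ j, (p.1 j) ^ 2) + ∑ i, Complex.normSq (p.2 i)) / (4 * T)))

/-- The product Gaussian
`G^{(k)}(q¹,…,q^{k−1}) = (∏_{α=1}^{k−1} G_{T_α}(q^α)) · G_{T_k}(Σ_α q^α)`
on `(ℝ^m × ℂ^n)^{k−1}`. -/
noncomputable def gaussProd (m n k : ℕ) (hk : 0 < k) (T : Fin k → ℝ)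
    (q : Fin (k - 1) → (Fin m → ℝ) × (Fin n → ℂ)) : ℝ :=
  (∏ α, gaussT m n (T (Fin.castLE (Nat.sub_le k 1) α)) (q α)) *
    gaussT m n (T ⟨k - 1, Nat.sub_lt hk one_pos⟩) (∑ α, q α)

/-- The Wirtinger derivative `∂F/∂w_i^α = (1/2)(∂F/∂u_i^α − i ∂F/∂v_i^α)` of a
real-valued function `F` on `(ℝ^m × ℂ^n)^{k−1}` in the complex coordinate
`w_i^α = u_i^α + i v_i^α`, expressed via directional (Fréchet) derivatives. -/
noncomputable def wirtingerDeriv (m n k : ℕ)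
    (F : (Fin (k - 1) → (Fin m → ℝ) × (Fin n → ℂ)) → ℝ)
    (q : Fin (k - 1) → (Fin m → ℝ) × (Fin n → ℂ))
    (α : Fin (k - 1)) (i : Fin n) : ℂ :=
  (1 / 2 : ℂ) *
    (((fderiv ℝ F q (Pi.single α ((0 : Fin m → ℝ), Pi.single i (1 : ℂ))) : ℝ) : ℂ)
      - Complex.I *
        ((fderiv ℝ F q (Pi.single α ((0 : Fin m → ℝ), Pi.single i Complex.I)) : ℝ) : ℂ))

/-! Each factor of `G^{(k)}` is a Gaussian in a linear function of `q`, and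
`(∂_u - i ∂_v) |w|² = 2 w̄`, so
`∂G^{(k)}/∂w_i^β = -(1/4) (w̄_i^β / T_β + w̄_i^Σ / T_k) G^{(k)}` with `w^Σ = Σ_γ w^γ`.
Weighting by `T_β` cancels the first term against `1/T_β`, and `Σ_β w̄_i^β = w̄_i^Σ` then gives
`ζ^i G^{(k)} = -(w̄_i^Σ / (4 T_k)) G^{(k)}`: subtracting `ζ^i` removes exactly the contribution
of the last factor `G_{T_k}(Σ_α q^α)`. -/

open ContinuousLinearMap

theorem HasFDerivAt.finsetProd_of_logDeriv {𝕜 ι E : Type*} [NontriviallyNormedField 𝕜]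
    [NormedAddCommGroup E] [NormedSpace 𝕜 E] [DecidableEq ι] {s : Finset ι} {f : ι → E → 𝕜}
    {L : ι → E →L[𝕜] 𝕜} {x : E} (hf : ∀ i ∈ s, HasFDerivAt (f i) (f i x • L i) x) :
    HasFDerivAt (∏ i ∈ s, f i ·) ((∏ i ∈ s, f i x) • ∑ i ∈ s, L i) x := by
  refine (HasFDerivAt.finsetProd hf).congr_fderiv ?_
  rw [Finset.smul_sum]
  refine Finset.sum_congr rfl fun i hi => ?_
  rw [smul_smul, Finset.prod_erase_mul _ _ hi]

/-- The Euclidean inner product `⟪p, ·⟫` on `ℝ^m × ℂ^n ≃ ℝ^(m+2n)`; the product type itself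
carries the sup norm and is not an inner product space. -/
noncomputable def prodInnerSL {m n : ℕ} (p : (Fin m → ℝ) × (Fin n → ℂ)) :
    (Fin m → ℝ) × (Fin n → ℂ) →L[ℝ] ℝ :=
  ∑ j, (innerSL ℝ (p.1 j)).comp ((proj j).comp (fst ℝ _ _)) +
    ∑ i, (innerSL ℝ (p.2 i)).comp ((proj i).comp (snd ℝ _ _))

theorem prodInnerSL_apply_single {m n : ℕ} (p : (Fin m → ℝ) × (Fin n → ℂ)) (i : Fin n) (c : ℂ) :
    prodInnerSL p (0, Pi.single i c) = inner ℝ (p.2 i) c := by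
  simp [prodInnerSL, Pi.single_apply, apply_ite]

theorem hasFDerivAt_sum_sq_add_sum_normSq {m n : ℕ} (p : (Fin m → ℝ) × (Fin n → ℂ)) :
    HasFDerivAt (fun p : (Fin m → ℝ) × (Fin n → ℂ) =>
      (∑ j, (p.1 j) ^ 2) + ∑ i, Complex.normSq (p.2 i)) ((2 : ℝ) • prodInnerSL p) p := by
  have hx (j : Fin m) :=
    (((proj j).comp (fst ℝ (Fin m → ℝ) (Fin n → ℂ))).hasFDerivAt (x := p)).norm_sq
  have hz (i : Fin n) :=
    (((proj i).comp (snd ℝ (Fin m → ℝ) (Fin n → ℂ))).hasFDerivAt (x := p)).norm_sq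
  have hsum := (HasFDerivAt.fun_sum (u := Finset.univ) fun j _ => hx j).add
    (HasFDerivAt.fun_sum (u := Finset.univ) fun i _ => hz i)
  simp only [coe_comp, Function.comp_apply, proj_apply, coe_fst', coe_snd', Real.norm_eq_abs,
    sq_abs, ← Complex.normSq_eq_norm_sq] at hsum
  refine hsum.congr_fderiv ?_
  simp only [prodInnerSL, two_smul, Finset.sum_add_distrib]
  abel

theorem hasFDerivAt_gaussT (m n : ℕ) (T : ℝ) (p : (Fin m → ℝ) × (Fin n → ℂ)) :
    HasFDerivAt (gaussT m n T) (gaussT m n T p • (-(2 * T)⁻¹) • prodInnerSL p) p := by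
  have hexp := (((hasFDerivAt_sum_sq_add_sum_normSq p).const_mul (-(4 * T)⁻¹)).exp).const_mul
    ((4 * Real.pi * T) ^ (-((2 * (n : ℝ) + (m : ℝ)) / 2)))
  have hfun : gaussT m n T = fun p => (4 * Real.pi * T) ^ (-((2 * (n : ℝ) + (m : ℝ)) / 2)) *
      Real.exp (-(4 * T)⁻¹ * ((∑ j, (p.1 j) ^ 2) + ∑ i, Complex.normSq (p.2 i))) := by
    funext p
    rw [gaussT, neg_mul, inv_mul_eq_div]
  rw [hfun]
  refine hexp.congr_fderiv ?_
  simp only [smul_smul]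
  congr 1
  ring

theorem hasFDerivAt_gaussProd (m n k : ℕ) (hk : 0 < k) (T : Fin k → ℝ)
    (q : Fin (k - 1) → (Fin m → ℝ) × (Fin n → ℂ)) :
    HasFDerivAt (gaussProd m n k hk T)
      (gaussProd m n k hk T q •
        ((∑ α, (-(2 * T (Fin.castLE (Nat.sub_le k 1) α))⁻¹) • (prodInnerSL (q α)).comp (proj α)) +
          (-(2 * T ⟨k - 1, Nat.sub_lt hk one_pos⟩)⁻¹) •
            (prodInnerSL (∑ α, q α)).comp (∑ α, proj α))) q := by
  have hfactor (α : Fin (k - 1)) (_ : α ∈ Finset.univ) :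
      HasFDerivAt (fun q => gaussT m n (T (Fin.castLE (Nat.sub_le k 1) α)) (q α))
        (gaussT m n (T (Fin.castLE (Nat.sub_le k 1) α)) (q α) •
          (-(2 * T (Fin.castLE (Nat.sub_le k 1) α))⁻¹) • (prodInnerSL (q α)).comp (proj α)) q := by
    have h := (hasFDerivAt_gaussT m n (T (Fin.castLE (Nat.sub_le k 1) α)) (q α)).comp
      (f := fun q => q α) q (hasFDerivAt_apply α q)
    simp only [smul_comp] at h
    exact h
  set S : (Fin (k - 1) → (Fin m → ℝ) × (Fin n → ℂ)) →L[ℝ] (Fin m → ℝ) × (Fin n → ℂ) :=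
    ∑ α, proj α
  have hlast := (hasFDerivAt_gaussT m n (T ⟨k - 1, Nat.sub_lt hk one_pos⟩) (S q)).comp q
    S.hasFDerivAt
  have hS : S q = ∑ α, q α := by simp [S]
  rw [hS] at hlast
  have hprod := (HasFDerivAt.finsetProd_of_logDeriv hfactor).mul hlast
  have hfun : (fun q => ∏ α, gaussT m n (T (Fin.castLE (Nat.sub_le k 1) α)) (q α)) *
      gaussT m n (T ⟨k - 1, Nat.sub_lt hk one_pos⟩) ∘ S = gaussProd m n k hk T := by
    funext q
    simp [gaussProd, S]
  rw [hfun] at hprod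
  refine hprod.congr_fderiv ?_
  simp only [gaussProd, smul_comp, Function.comp_apply, hS]
  module

theorem fderiv_gaussProd_apply_single (m n k : ℕ) (hk : 0 < k) (T : Fin k → ℝ)
    (q : Fin (k - 1) → (Fin m → ℝ) × (Fin n → ℂ)) (β : Fin (k - 1))
    (w : (Fin m → ℝ) × (Fin n → ℂ)) :
    fderiv ℝ (gaussProd m n k hk T) q (Pi.single β w) =
      -gaussProd m n k hk T q * (prodInnerSL (q β) w / (2 * T (Fin.castLE (Nat.sub_le k 1) β)) +
        prodInnerSL (∑ α, q α) w / (2 * T ⟨k - 1, Nat.sub_lt hk one_pos⟩)) := by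
  rw [(hasFDerivAt_gaussProd m n k hk T q).fderiv]
  simp only [smul_add, add_apply, smul_apply, sum_apply, comp_apply, proj_apply, Pi.single_apply,
    apply_ite, map_zero, smul_eq_mul, mul_zero, Finset.sum_ite_eq', Finset.mem_univ, ↓reduceIte]
  ring

theorem Complex.ofReal_inner_one_sub_I_mul_ofReal_inner_I (z : ℂ) :
    ((inner ℝ z 1 : ℝ) : ℂ) - Complex.I * ((inner ℝ z Complex.I : ℝ) : ℂ) = starRingEnd ℂ z := by
  apply Complex.ext <;> simp [Complex.inner]

theorem wirtingerDeriv_gaussProd (m n k : ℕ) (hk : 0 < k) (T : Fin k → ℝ)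
    (q : Fin (k - 1) → (Fin m → ℝ) × (Fin n → ℂ)) (β : Fin (k - 1)) (i : Fin n) :
    wirtingerDeriv m n k (gaussProd m n k hk T) q β i =
      -(gaussProd m n k hk T q / 4 : ℂ) *
        (starRingEnd ℂ ((q β).2 i) / T (Fin.castLE (Nat.sub_le k 1) β) +
          (∑ α, starRingEnd ℂ ((q α).2 i)) / T ⟨k - 1, Nat.sub_lt hk one_pos⟩) := by
  have hβ := Complex.ofReal_inner_one_sub_I_mul_ofReal_inner_I ((q β).2 i)
  have hsum := Complex.ofReal_inner_one_sub_I_mul_ofReal_inner_I ((∑ α, q α).2 i)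
  have hconj : starRingEnd ℂ ((∑ α, q α).2 i) = ∑ α, starRingEnd ℂ ((q α).2 i) := by
    rw [Prod.snd_sum, Finset.sum_apply, map_sum]
  rw [hconj] at hsum
  simp only [wirtingerDeriv, fderiv_gaussProd_apply_single, prodInnerSL_apply_single]
  push_cast
  linear_combination (-(gaussProd m n k hk T q / 4 : ℂ)) *
    (hβ / T (Fin.castLE (Nat.sub_le k 1) β) + hsum / T ⟨k - 1, Nat.sub_lt hk one_pos⟩)

theorem Finset.sum_mul_div_add_sum_div {ι K : Type*} [Fintype ι] [Field K] {a w : ι → K} {b : K}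
    (ha : ∀ i, a i ≠ 0) (hb : b ≠ 0) :
    ∑ i, a i * (w i / a i + (∑ j, w j) / b) = (∑ i, a i + b) * ((∑ j, w j) / b) := by
  simp only [mul_add, Finset.sum_add_distrib, mul_div_cancel₀ _ (ha _), ← Finset.sum_mul]
  field_simp
  ring

theorem Fin.sum_univ_eq_sum_castLE_add {M : Type*} [AddCommMonoid M] {k : ℕ} (hk : 0 < k)
    (f : Fin k → M) :
    ∑ i, f i =
      ∑ i : Fin (k - 1), f (Fin.castLE (Nat.sub_le k 1) i) +
        f ⟨k - 1, Nat.sub_lt hk Nat.one_pos⟩ := by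
  obtain ⟨k, rfl⟩ := Nat.exists_eq_add_one_of_ne_zero hk.ne'
  exact Fin.sum_univ_castSucc f

/-- For `k ≥ 2`, `T₁, …, T_k > 0`, `1 ≤ α ≤ k−1`, `1 ≤ i ≤ n`,
`(∂/∂w_i^α − ζ^i) G^{(k)} = −(w̄_i^α/(4T_α)) · G^{(k)}`, where
`ζ^i = (1/(T₁+⋯+T_k)) Σ_{β=1}^{k−1} T_β ∂/∂w_i^β`. -/
theorem wirtinger_minus_zeta_gaussProd (m n k : ℕ) (hk : 2 ≤ k) (T : Fin k → ℝ)
    (hT : ∀ i, 0 < T i) (α : Fin (k - 1)) (i : Fin n)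
    (q : Fin (k - 1) → (Fin m → ℝ) × (Fin n → ℂ)) :
    wirtingerDeriv m n k (gaussProd m n k (by omega) T) q α i
        - (((∑ γ, T γ : ℝ) : ℂ))⁻¹ *
            ∑ β : Fin (k - 1), (T (Fin.castLE (Nat.sub_le k 1) β) : ℂ) *
              wirtingerDeriv m n k (gaussProd m n k (by omega) T) q β i
      = -((starRingEnd ℂ) ((q α).2 i) / (4 * (T (Fin.castLE (Nat.sub_le k 1) α) : ℂ)))
          * ((gaussProd m n k (by omega) T q : ℝ) : ℂ) := by
  have hk0 : 0 < k := by omega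
  have hT0 (γ : Fin k) : (T γ : ℂ) ≠ 0 := Complex.ofReal_ne_zero.mpr (hT γ).ne'
  have hsum : ((∑ γ, T γ : ℝ) : ℂ) ≠ 0 :=
    Complex.ofReal_ne_zero.mpr (Finset.sum_pos (fun γ _ => hT γ) ⟨⟨0, hk0⟩, Finset.mem_univ _⟩).ne'
  simp only [wirtingerDeriv_gaussProd, mul_left_comm (T _ : ℂ), ← Finset.mul_sum,
    Finset.sum_mul_div_add_sum_div (fun _ => hT0 _) (hT0 _)]
  rw [Fin.sum_univ_eq_sum_castLE_add hk0 T] at hsum ⊢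
  push_cast at hsum ⊢
  field_simp
  ring
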